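/- Let p be a prime, N ≥ 1, k = p^N - 1, K a field of characteristic p, and a ∈ K. Define L(f,g) = Σ_{i=0}^{⌊(k-1)/2⌋} (-1)^i (f^{(i)} g^{(k-i)} + f^{(k-i)} g^{(i)}) plus, if p > 2 and k is even, the middle term (-1)^{k/2} f^{(k/2)} g^{(k/2)}. Then L is a vect(1;N)-invariant bilinear operator F_{1-a} ⊗ F_a → F_0, i.e. for all h∂ ∈ vect(1;N), L_{h∂}(L(f,g)) = L(L_{h∂}f, g) + L(f, L_{h∂}g), where the first source has weight 1-a, the second has weight a, and the target has weight (1-a)+a+k = k+1 ≡ 0 mod p. -/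

import Mathlib

open Finset

/-- Multiplication in the divided power algebra `O(1;N)` truncated at `n = p^N`;
elements are given by their coefficients in the basis `u^{(r)}`, `0 ≤ r < n`,
and `u^{(r)} · u^{(s)} = C(r+s, r) u^{(r+s)}` (zero if `r+s ≥ n`). -/
def dpMul {K : Type*} [Field K] (n : ℕ) (f g : ℕ → K) : ℕ → K :=
  fun t => if t < n then ∑ i ∈ Finset.range (t + 1), ((t.choose i : K) * f i * g (t - i)) else 0

/-- The distinguished derivation `∂` of `O(1;N)`: `∂(u^{(r)}) = u^{(r-1)}`. -/
def dpDer {K : Type*} [Field K] (n : ℕ) (f : ℕ → K) : ℕ → K :=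
  fun r => if r + 1 < n then f (r + 1) else 0

/-- Membership in `O(1;N)`: coefficients vanish in degrees `≥ n`. -/
def dpSupp {K : Type*} [Field K] (n : ℕ) (f : ℕ → K) : Prop := ∀ r, n ≤ r → f r = 0

/-- Berezin-type integral: the coefficient of `u^{(n-1)}`. -/
def dpInt {K : Type*} [Field K] (n : ℕ) (f : ℕ → K) : K := f (n - 1)

/-- Lie derivative along `h∂ ∈ vect(1;N)` acting on the weighted density module
`F_a`: `L_{h∂}(f) = h·∂f + a·f·∂h`. -/
def dpLie {K : Type*} [Field K] (n : ℕ) (a : K) (h f : ℕ → K) : ℕ → K :=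
  dpMul n h (dpDer n f) + a • dpMul n f (dpDer n h)

/-- The operator L_{p,N}(f,g) = Σ_{i=0}^{⌊(k-1)/2⌋} (-1)^i (f^{(i)} g^{(k-i)} +
f^{(k-i)} g^{(i)}), plus the middle term (-1)^{k/2} f^{(k/2)} g^{(k/2)} when
p > 2 (k = p^N - 1 is then even). -/
def Lop {K : Type*} [Field K] (p n k : ℕ) (f g : ℕ → K) : ℕ → K :=
  (∑ i ∈ Finset.range ((k - 1) / 2 + 1),
    ((-1 : K) ^ i) •
      (dpMul n ((dpDer n)^[i] f) ((dpDer n)^[k - i] g)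
        + dpMul n ((dpDer n)^[k - i] f) ((dpDer n)^[i] g)))
  + (if p = 2 then 0
     else ((-1 : K) ^ (k / 2)) •
        dpMul n ((dpDer n)^[k / 2] f) ((dpDer n)^[k / 2] g))


/-- Monomial `D^r h · (D^s f · D^{k+1-r-s} g)`. -/
def mono {K : Type*} [Field K] (n k : ℕ) (h f g : ℕ → K) (r s : ℕ) : ℕ → K :=
  dpMul n ((dpDer n)^[r] h) (dpMul n ((dpDer n)^[s] f) ((dpDer n)^[k+1-r-s] g))

def idxQ (k : ℕ) : Finset ((_ : ℕ) × ℕ) :=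
  (Finset.range (k+2)).sigma (fun r => Finset.range (k+2-r))

def cfA (K : Type*) [Field K] (r s : ℕ) : K :=
  if 1 ≤ s then ((-1:K)^(r+s-1)) * (((r+s-1).choose r : ℕ) : K) else 0
def cfB (K : Type*) [Field K] (r s : ℕ) : K :=
  if 1 ≤ r then ((-1:K)^(r+s-1)) * (((r+s-1).choose (r-1) : ℕ) : K) else 0
def cfC (K : Type*) [Field K] (k r s : ℕ) : K :=
  ((-1:K)^s) * (((k-s).choose r : ℕ) : K)
def cfD (K : Type*) [Field K] (k r s : ℕ) : K :=
  if 1 ≤ r then ((-1:K)^s) * (((k-s).choose (r-1) : ℕ) : K) else 0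

section Aux
variable {K : Type*} [Field K] {n : ℕ}

lemma dpSupp_mul (f g : ℕ → K) : dpSupp n (dpMul n f g) := by
  intro r hr; simp [dpMul, Nat.not_lt.2 hr]

lemma dpSupp_der (f : ℕ → K) : dpSupp n (dpDer n f) := by
  intro r hr; simp only [dpDer]; rw [if_neg]; omega

lemma dpSupp_iter (i : ℕ) (f : ℕ → K) (hi : 1 ≤ i) : dpSupp n ((dpDer n)^[i] f) := by
  obtain ⟨j, rfl⟩ := Nat.exists_eq_add_of_le hi
  rw [Function.iterate_add_apply]
  exact dpSupp_der _

lemma dpMul_zero_left (g : ℕ → K) : dpMul n 0 g = 0 := by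
  funext t; simp [dpMul]

lemma dpMul_zero_right (f : ℕ → K) : dpMul n f 0 = 0 := by
  funext t; simp [dpMul]

lemma dpMul_add_left (f₁ f₂ g : ℕ → K) :
    dpMul n (f₁ + f₂) g = dpMul n f₁ g + dpMul n f₂ g := by
  funext t; simp only [dpMul, Pi.add_apply]
  split
  · rw [← Finset.sum_add_distrib]; congr 1; funext i; ring
  · simp

lemma dpMul_add_right (f g₁ g₂ : ℕ → K) :
    dpMul n f (g₁ + g₂) = dpMul n f g₁ + dpMul n f g₂ := by
  funext t; simp only [dpMul, Pi.add_apply]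
  split
  · rw [← Finset.sum_add_distrib]; congr 1; funext i; ring
  · simp

lemma dpMul_smul_left (c : K) (f g : ℕ → K) :
    dpMul n (c • f) g = c • dpMul n f g := by
  funext t; simp only [dpMul, Pi.smul_apply, smul_eq_mul]
  split
  · rw [Finset.mul_sum]; congr 1; funext i; ring
  · simp

lemma dpMul_smul_right (c : K) (f g : ℕ → K) :
    dpMul n f (c • g) = c • dpMul n f g := by
  funext t; simp only [dpMul, Pi.smul_apply, smul_eq_mul]
  split
  · rw [Finset.mul_sum]; congr 1; funext i; ring
  · simp

lemma dpMul_comm (f g : ℕ → K) : dpMul n f g = dpMul n g f := by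
  funext t; simp only [dpMul]
  split
  · rw [← Finset.sum_range_reflect]
    apply Finset.sum_congr rfl
    intro i hi
    rw [Finset.mem_range] at hi
    have hi' : i ≤ t := by omega
    rw [Nat.add_sub_cancel, Nat.sub_sub_self hi', Nat.choose_symm hi']
    ring
  · rfl

lemma dpDer_add (f g : ℕ → K) : dpDer n (f + g) = dpDer n f + dpDer n g := by
  funext r; simp only [dpDer, Pi.add_apply]; split <;> simp

lemma dpDer_smul (c : K) (f : ℕ → K) : dpDer n (c • f) = c • dpDer n f := by
  funext r; simp only [dpDer, Pi.smul_apply, smul_eq_mul]; split <;> simp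

lemma dpDer_zero : dpDer n (0 : ℕ → K) = 0 := by
  funext r; simp [dpDer]

lemma dpDer_iter_apply_supp (i : ℕ) {f : ℕ → K} (hf : dpSupp n f) (r : ℕ) :
    (dpDer n)^[i] f r = f (r + i) := by
  induction i generalizing r with
  | zero => rfl
  | succ i ih =>
    rw [Function.iterate_succ_apply]
    rw [show (dpDer n)^[i] (dpDer n f) = (dpDer n)^[i+1] f from
      (Function.iterate_succ_apply (dpDer n) i f).symm, Function.iterate_succ_apply']
    simp only [dpDer]
    rcases lt_or_ge (r + 1) n with hr | hr
    · rw [if_pos hr, ih]; congr 1; omega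
    · rw [if_neg (by omega)]
      exact (hf _ (by omega)).symm

lemma dpDer_iter_ge {m : ℕ} (hm : n ≤ m) {f : ℕ → K} (hf : dpSupp n f) :
    (dpDer n)^[m] f = 0 := by
  funext r
  rw [dpDer_iter_apply_supp _ hf, Pi.zero_apply]
  exact hf _ (by omega)

lemma dpDer_apply_supp {f : ℕ → K} (hf : dpSupp n f) (r : ℕ) :
    dpDer n f r = f (r + 1) := dpDer_iter_apply_supp 1 hf r


lemma pascal_sum (f g : ℕ → K) (r : ℕ) :
    ((∑ i ∈ range (r+1), (r.choose i : K) * f (i+1) * g (r - i))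
      + ∑ i ∈ range (r+1), (r.choose i : K) * f i * g (r - i + 1))
    = ∑ j ∈ range (r+2), ((r+1).choose j : K) * f j * g (r+1-j) := by
  have h1 : ∑ j ∈ range (r+2), ((r+1).choose j : K) * f j * g (r+1-j)
      = (∑ j ∈ range (r+1), (((r+1).choose (j+1) : ℕ) : K) * f (j+1) * g (r-j))
          + f 0 * g (r+1) := by
    rw [Finset.sum_range_succ' (fun j => ((r+1).choose j : K) * f j * g (r+1-j)) (r+1)]
    simp [Nat.succ_sub_succ]
  have h2 : ∑ i ∈ range (r+1), (r.choose i : K) * f i * g (r - i + 1)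
      = (∑ i ∈ range r, (r.choose (i+1) : K) * f (i+1) * g (r-i)) + f 0 * g (r+1) := by
    rw [Finset.sum_range_succ' (fun i => (r.choose i : K) * f i * g (r - i + 1)) r]
    simp only [Nat.choose_zero_right, Nat.cast_one, one_mul, Nat.sub_zero]
    congr 1
    apply Finset.sum_congr rfl
    intro i hi
    rw [mem_range] at hi
    congr 2
    omega
  have h3 : ∑ i ∈ range r, (r.choose (i+1) : K) * f (i+1) * g (r-i)
      = ∑ i ∈ range (r+1), (r.choose (i+1) : K) * f (i+1) * g (r-i) := by
    rw [Finset.sum_range_succ, Nat.choose_succ_self]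
    simp
  rw [h1, h2, h3, ← add_assoc, ← Finset.sum_add_distrib]
  congr 1
  apply Finset.sum_congr rfl
  intro j _
  rw [Nat.choose_succ_succ']
  push_cast
  ring

lemma choose_pow_cast_eq_zero (p : ℕ) (hp : p.Prime) [CharP K p] (N j : ℕ)
    (h1 : j ≠ 0) (h2 : j ≠ p^N) : (((p^N).choose j : ℕ) : K) = 0 := by
  rw [CharP.cast_eq_zero_iff K p]
  exact Nat.Prime.dvd_choose_pow hp h1 h2

lemma choose_k_cast (p N : ℕ) (hp : p.Prime) [CharP K p] {k : ℕ} (hk : k = p^N - 1)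
    {s : ℕ} (hs : s ≤ k) : ((k.choose s : ℕ) : K) = (-1)^s := by
  have hpow : 1 ≤ p ^ N := Nat.one_le_pow _ _ hp.pos
  induction s with
  | zero => simp
  | succ s ih =>
    have h1 : (k+1).choose (s+1) = k.choose s + k.choose (s+1) := Nat.choose_succ_succ' k s
    have h2 : (((k+1).choose (s+1) : ℕ) : K) = 0 := by
      have hkp : k + 1 = p ^ N := by omega
      rw [hkp]
      exact choose_pow_cast_eq_zero p hp N (s+1) (by omega) (by omega)
    rw [h1] at h2
    push_cast at h2
    have h3 := ih (by omega)
    have h4 : ((k.choose (s+1) : ℕ) : K) = -(-1)^s := by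
      rw [h3] at h2; linear_combination h2
    rw [h4]; ring

lemma choose_sub_cast (p N : ℕ) (hp : p.Prime) [CharP K p] {k : ℕ} (hk : k = p^N - 1)
    {s j : ℕ} (hs : s ≤ k) (hj : j ≤ k) (hsj : s + j ≤ k + 1) :
    (((k - s).choose j : ℕ) : K) = (-1)^j * (((s+j).choose j : ℕ) : K) := by
  have hpow : 1 ≤ p ^ N := Nat.one_le_pow _ _ hp.pos
  rcases le_or_gt (s + j) k with hsj' | hsj'
  · have hid := Nat.choose_mul (n := k) (k := s + j) (s := s) (Nat.le_add_right s j)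
    rw [Nat.add_sub_cancel_left] at hid
    have e : ((k.choose (s+j) : ℕ) : K) * (((s+j).choose s : ℕ) : K)
        = ((k.choose s : ℕ) : K) * (((k-s).choose j : ℕ) : K) := by
      rw [← Nat.cast_mul, ← Nat.cast_mul, hid]
    rw [choose_k_cast p N hp hk hsj', choose_k_cast p N hp hk hs] at e
    have hsym : (s+j).choose s = (s+j).choose j := Nat.choose_symm_add
    apply mul_left_cancel₀ (a := (-1:K)^s) (pow_ne_zero _ (by norm_num))
    rw [← e, hsym, pow_add]
    ring
  · have hj1 : j ≠ 0 := by omega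
    have hcz : (k - s).choose j = 0 := Nat.choose_eq_zero_of_lt (by omega)
    have hspj : s + j = p ^ N := by omega
    rw [hcz, hspj, choose_pow_cast_eq_zero p hp N j hj1 (by omega)]
    simp

lemma dpLeibniz (p N : ℕ) (hp : p.Prime) [CharP K p] (hn : n = p ^ N)
    {f g : ℕ → K} (hf : dpSupp n f) (hg : dpSupp n g) :
    dpDer n (dpMul n f g) = dpMul n (dpDer n f) g + dpMul n f (dpDer n g) := by
  funext r
  have key : ∀ r' < n, dpMul n (dpDer n f) g r' + dpMul n f (dpDer n g) r'
      = ∑ j ∈ range (r'+2), ((r'+1).choose j : K) * f j * g (r'+1-j) := by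
    intro r' hr'
    simp only [dpMul, if_pos hr']
    rw [← pascal_sum f g r']
    congr 1
    · exact Finset.sum_congr rfl fun i _ => by rw [dpDer_apply_supp hf]
    · exact Finset.sum_congr rfl fun i _ => by rw [dpDer_apply_supp hg]
  rcases lt_or_ge r n with hr | hr
  · rcases lt_or_ge (r+1) n with hr1 | hr1
    · have lhs : dpDer n (dpMul n f g) r
          = ∑ j ∈ range (r+2), ((r+1).choose j : K) * f j * g (r+1-j) := by
        simp only [dpDer, dpMul, if_pos hr1]
      rw [lhs, Pi.add_apply, key r hr]
    · have hrn : r + 1 = n := by omega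
      have lhs : dpDer n (dpMul n f g) r = 0 := by
        simp only [dpDer, if_neg (Nat.not_lt.2 hr1)]
      rw [lhs, Pi.add_apply, key r hr]
      symm
      apply Finset.sum_eq_zero
      intro j hj
      rw [mem_range] at hj
      rcases Nat.eq_zero_or_pos j with rfl | hj0
      · rw [hg _ (by omega)]; ring
      · rcases eq_or_lt_of_le (Nat.lt_succ_iff.mp hj) with hje | hjl
        · rw [hf _ (by omega)]; ring
        · have : (((r+1).choose j : ℕ) : K) = 0 := by
            rw [hrn, hn]
            exact choose_pow_cast_eq_zero p hp N j (by omega) (by rw [← hn]; omega)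
          rw [this]; ring
  · have l : dpDer n (dpMul n f g) r = 0 := by
      simp only [dpDer]
      rw [if_neg (by omega)]
    rw [l, Pi.add_apply]
    simp only [dpMul, if_neg (Nat.not_lt.2 hr)]
    simp


lemma dpMul_assoc (f g h : ℕ → K) :
    dpMul n (dpMul n f g) h = dpMul n f (dpMul n g h) := by
  funext t
  simp only [dpMul]
  rcases lt_or_ge t n with ht | ht
  · rw [if_pos ht, if_pos ht]
    have e1 : ∑ i ∈ range (t+1), ((t.choose i : ℕ) : K) *
          (if i < n then ∑ j ∈ range (i+1), ((i.choose j : ℕ) : K) * f j * g (i-j) else 0) * h (t-i)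
        = ∑ i ∈ range (t+1), ∑ j ∈ range (i+1),
            ((t.choose i : ℕ) : K) * (((i.choose j : ℕ) : K) * f j * g (i - j)) * h (t - i) := by
      apply Finset.sum_congr rfl
      intro i hi
      rw [mem_range] at hi
      rw [if_pos (by omega), Finset.mul_sum, Finset.sum_mul]
    have e2 : ∑ i ∈ range (t+1), ((t.choose i : ℕ) : K) * f i *
          (if t - i < n then ∑ j ∈ range (t-i+1), (((t-i).choose j : ℕ) : K) * g j * h (t-i-j) else 0)
        = ∑ i ∈ range (t+1), ∑ j ∈ range (t-i+1),
            ((t.choose i : ℕ) : K) * f i * ((((t-i).choose j : ℕ) : K) * g j * h (t-i-j)) := by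
      apply Finset.sum_congr rfl
      intro i hi
      rw [mem_range] at hi
      rw [if_pos (by omega), Finset.mul_sum]
    rw [e1, e2, Finset.sum_sigma' (range (t+1)) (fun i => range (i+1)),
      Finset.sum_sigma' (range (t+1)) (fun i => range (t-i+1))]
    apply Finset.sum_nbij' (i := fun x => (⟨x.2, x.1 - x.2⟩ : Σ _ : ℕ, ℕ))
      (j := fun x => (⟨x.1 + x.2, x.1⟩ : Σ _ : ℕ, ℕ))
    · rintro ⟨x, y⟩ ha
      simp only [Finset.mem_sigma, mem_range] at ha ⊢
      omega
    · rintro ⟨x, y⟩ ha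
      simp only [Finset.mem_sigma, mem_range] at ha ⊢
      omega
    · rintro ⟨x, y⟩ ha
      simp only [Finset.mem_sigma, mem_range] at ha
      simp only
      have e : y + (x - y) = x := by omega
      rw [e]
    · rintro ⟨x, y⟩ ha
      simp only [Finset.mem_sigma, mem_range] at ha
      simp only
      have e : x + y - x = y := by omega
      rw [e]
    · rintro ⟨i, j⟩ ha
      simp only [Finset.mem_sigma, mem_range] at ha
      obtain ⟨hi, hj⟩ := ha
      simp only
      have hco := Nat.choose_mul (n := t) (k := i) (s := j) (by omega)
      have e3 : t - j - (i - j) = t - i := by omega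
      rw [e3]
      have hc : ((t.choose i : ℕ) : K) * ((i.choose j : ℕ) : K)
          = ((t.choose j : ℕ) : K) * (((t-j).choose (i-j) : ℕ) : K) := by
        rw [← Nat.cast_mul, ← Nat.cast_mul, hco]
      linear_combination (f j * g (i-j) * h (t-i)) * hc
  · rw [if_neg (by omega), if_neg (by omega)]

lemma dpDer_sum {ι : Type*} (s : Finset ι) (F : ι → ℕ → K) :
    dpDer n (∑ i ∈ s, F i) = ∑ i ∈ s, dpDer n (F i) := by
  funext r
  simp only [dpDer, Finset.sum_apply]
  split
  · rfl
  · simp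

lemma pascal_smul {M : Type*} [AddCommMonoid M] [Module K M] (F : ℕ → M) (m : ℕ) :
    ((∑ j ∈ range (m+1), ((m.choose j : ℕ) : K) • F (j+1))
      + ∑ j ∈ range (m+1), ((m.choose j : ℕ) : K) • F j)
    = ∑ j ∈ range (m+2), (((m+1).choose j : ℕ) : K) • F j := by
  have h1 : ∑ j ∈ range (m+2), (((m+1).choose j : ℕ) : K) • F j
      = (∑ j ∈ range (m+1), (((m+1).choose (j+1) : ℕ) : K) • F (j+1)) + F 0 := by
    rw [Finset.sum_range_succ' (fun j => (((m+1).choose j : ℕ) : K) • F j) (m+1)]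
    simp
  have h2 : ∑ j ∈ range (m+1), ((m.choose j : ℕ) : K) • F j
      = (∑ j ∈ range m, ((m.choose (j+1) : ℕ) : K) • F (j+1)) + F 0 := by
    rw [Finset.sum_range_succ' (fun j => ((m.choose j : ℕ) : K) • F j) m]
    simp
  have h3 : ∑ j ∈ range m, ((m.choose (j+1) : ℕ) : K) • F (j+1)
      = ∑ j ∈ range (m+1), ((m.choose (j+1) : ℕ) : K) • F (j+1) := by
    rw [Finset.sum_range_succ, Nat.choose_succ_self]
    simp
  rw [h1, h2, h3, ← add_assoc, ← Finset.sum_add_distrib]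
  congr 1
  apply Finset.sum_congr rfl
  intro j _
  rw [Nat.choose_succ_succ', Nat.cast_add, add_smul]

lemma dpSupp_iter' {f : ℕ → K} (hf : dpSupp n f) (i : ℕ) :
    dpSupp n ((dpDer n)^[i] f) := by
  intro r hr
  rw [dpDer_iter_apply_supp _ hf]
  exact hf _ (by omega)

lemma dpLeibniz_iter (p N : ℕ) (hp : p.Prime) [CharP K p] (hn : n = p ^ N) (m : ℕ)
    {f g : ℕ → K} (hf : dpSupp n f) (hg : dpSupp n g) :
    (dpDer n)^[m] (dpMul n f g)
      = ∑ j ∈ range (m+1), ((m.choose j : ℕ) : K) •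
          dpMul n ((dpDer n)^[j] f) ((dpDer n)^[m-j] g) := by
  induction m with
  | zero => simp
  | succ m ih =>
    rw [Function.iterate_succ_apply', ih, dpDer_sum]
    have e1 : ∀ j ∈ range (m+1),
        dpDer n (((m.choose j : ℕ) : K) • dpMul n ((dpDer n)^[j] f) ((dpDer n)^[m-j] g))
        = ((m.choose j : ℕ) : K) • dpMul n ((dpDer n)^[j+1] f) ((dpDer n)^[m+1-(j+1)] g)
          + ((m.choose j : ℕ) : K) • dpMul n ((dpDer n)^[j] f) ((dpDer n)^[m+1-j] g) := by
      intro j hj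
      rw [mem_range] at hj
      rw [dpDer_smul, dpLeibniz p N hp hn (dpSupp_iter' hf j) (dpSupp_iter' hg (m-j)),
        smul_add, ← Function.iterate_succ_apply' (dpDer n) j f,
        ← Function.iterate_succ_apply' (dpDer n) (m-j) g]
      have ea : m + 1 - (j + 1) = m - j := by omega
      have eb : m + 1 - j = m - j + 1 := by omega
      rw [ea, eb]
    rw [Finset.sum_congr rfl e1, Finset.sum_add_distrib]
    exact pascal_smul (fun j => dpMul n ((dpDer n)^[j] f) ((dpDer n)^[m+1-j] g)) m


/-- The symmetrized operator written as a single sum over `i = 0..k`. -/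
def Sop {K : Type*} [Field K] (n k : ℕ) (f g : ℕ → K) : ℕ → K :=
  ∑ i ∈ Finset.range (k+1),
    ((-1:K)^i) • dpMul n ((dpDer n)^[i] f) ((dpDer n)^[k-i] g)

lemma dpDer_iter_add (i : ℕ) (x y : ℕ → K) :
    (dpDer n)^[i] (x + y) = (dpDer n)^[i] x + (dpDer n)^[i] y := by
  induction i with
  | zero => rfl
  | succ i ih =>
    rw [Function.iterate_succ_apply', Function.iterate_succ_apply',
      Function.iterate_succ_apply', ih, dpDer_add]

lemma dpDer_iter_smul (i : ℕ) (c : K) (x : ℕ → K) :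
    (dpDer n)^[i] (c • x) = c • (dpDer n)^[i] x := by
  induction i with
  | zero => rfl
  | succ i ih =>
    rw [Function.iterate_succ_apply', Function.iterate_succ_apply', ih, dpDer_smul]

lemma Sop_add_left (k : ℕ) (x y g : ℕ → K) :
    Sop n k (x + y) g = Sop n k x g + Sop n k y g := by
  unfold Sop
  rw [← Finset.sum_add_distrib]
  apply Finset.sum_congr rfl
  intro i _
  rw [dpDer_iter_add, dpMul_add_left, smul_add]

lemma Sop_smul_left (k : ℕ) (c : K) (x g : ℕ → K) :
    Sop n k (c • x) g = c • Sop n k x g := by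
  unfold Sop
  rw [Finset.smul_sum]
  apply Finset.sum_congr rfl
  intro i _
  rw [dpDer_iter_smul, dpMul_smul_left, smul_comm]

lemma Sop_add_right (k : ℕ) (f x y : ℕ → K) :
    Sop n k f (x + y) = Sop n k f x + Sop n k f y := by
  unfold Sop
  rw [← Finset.sum_add_distrib]
  apply Finset.sum_congr rfl
  intro i _
  rw [dpDer_iter_add, dpMul_add_right, smul_add]

lemma Sop_smul_right (k : ℕ) (c : K) (f x : ℕ → K) :
    Sop n k f (c • x) = c • Sop n k f x := by
  unfold Sop
  rw [Finset.smul_sum]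
  apply Finset.sum_congr rfl
  intro i _
  rw [dpDer_iter_smul, dpMul_smul_right, smul_comm]

lemma dpMul_sum_left {ι : Type*} (s : Finset ι) (F : ι → ℕ → K) (g : ℕ → K) :
    dpMul n (∑ i ∈ s, F i) g = ∑ i ∈ s, dpMul n (F i) g := by
  induction s using Finset.cons_induction with
  | empty => simp [dpMul_zero_left]
  | cons a s ha ih => rw [Finset.sum_cons, dpMul_add_left, ih, Finset.sum_cons]

lemma dpMul_sum_right {ι : Type*} (s : Finset ι) (f : ℕ → K) (F : ι → ℕ → K) :
    dpMul n f (∑ i ∈ s, F i) = ∑ i ∈ s, dpMul n f (F i) := by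
  induction s using Finset.cons_induction with
  | empty => simp [dpMul_zero_right]
  | cons a s ha ih => rw [Finset.sum_cons, dpMul_add_right, ih, Finset.sum_cons]

lemma dpMul_left_comm (a b c : ℕ → K) :
    dpMul n a (dpMul n b c) = dpMul n b (dpMul n a c) := by
  rw [← dpMul_assoc, dpMul_comm a b, dpMul_assoc]

lemma Sop_der_zero (p N : ℕ) (hp : p.Prime) [CharP K p] (hn : n = p ^ N) {k : ℕ}
    (hk : k + 1 = n) {f g : ℕ → K} (hf : dpSupp n f) (hg : dpSupp n g) :
    dpDer n (Sop n k f g) = 0 := by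
  unfold Sop
  rw [dpDer_sum]
  have hfz : (dpDer n)^[k+1] f = 0 := dpDer_iter_ge (by omega) hf
  have hgz : (dpDer n)^[k+1] g = 0 := dpDer_iter_ge (by omega) hg
  have e1 : ∀ i ∈ range (k+1),
      dpDer n (((-1:K)^i) • dpMul n ((dpDer n)^[i] f) ((dpDer n)^[k-i] g))
      = ((-1:K)^i) • dpMul n ((dpDer n)^[i+1] f) ((dpDer n)^[k-i] g)
        + ((-1:K)^i) • dpMul n ((dpDer n)^[i] f) ((dpDer n)^[k-i+1] g) := by
    intro i hi
    rw [dpDer_smul, dpLeibniz p N hp hn (dpSupp_iter' hf i) (dpSupp_iter' hg (k-i)), smul_add,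
      ← Function.iterate_succ_apply' (dpDer n) i f,
      ← Function.iterate_succ_apply' (dpDer n) (k-i) g]
  rw [Finset.sum_congr rfl e1, Finset.sum_add_distrib]
  have s1 : ∑ i ∈ range (k+1), ((-1:K)^i) • dpMul n ((dpDer n)^[i+1] f) ((dpDer n)^[k-i] g)
      = ∑ i ∈ range k, ((-1:K)^i) • dpMul n ((dpDer n)^[i+1] f) ((dpDer n)^[k-i] g) := by
    rw [Finset.sum_range_succ, hfz, dpMul_zero_left, smul_zero, add_zero]
  have s2 : ∑ i ∈ range (k+1), ((-1:K)^i) • dpMul n ((dpDer n)^[i] f) ((dpDer n)^[k-i+1] g)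
      = ∑ i ∈ range k, ((-1:K)^(i+1)) • dpMul n ((dpDer n)^[i+1] f) ((dpDer n)^[k-i] g) := by
    rw [Finset.sum_range_succ'
      (fun i => ((-1:K)^i) • dpMul n ((dpDer n)^[i] f) ((dpDer n)^[k-i+1] g)) k]
    have e0 : ((-1:K)^(0:ℕ)) • dpMul n ((dpDer n)^[(0:ℕ)] f) ((dpDer n)^[k-0+1] g) = 0 := by
      rw [Nat.sub_zero, hgz, dpMul_zero_right, smul_zero]
    rw [e0, add_zero]
    apply Finset.sum_congr rfl
    intro i hi
    rw [mem_range] at hi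
    have e : k - (i+1) + 1 = k - i := by omega
    rw [e]
  rw [s1, s2, ← Finset.sum_add_distrib]
  apply Finset.sum_eq_zero
  intro i _
  rw [← add_smul]
  have e : ((-1:K)^i + (-1:K)^(i+1)) = 0 := by ring
  rw [e, zero_smul]


lemma sum_range_split {M : Type*} [AddCommMonoid M] (A : ℕ → M) (k m : ℕ) (hm : m ≤ k) :
    ∑ i ∈ range (k+1), A i
      = (∑ i ∈ range (m+1), A i) + ∑ i ∈ range (k - m), A (k - i) := by
  have hsplit : k + 1 = (m+1) + (k - m) := by omega
  rw [hsplit, Finset.sum_range_add]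
  congr 1
  rw [← Finset.sum_range_reflect (fun i => A (m + 1 + i)) (k - m)]
  apply Finset.sum_congr rfl
  intro i hi
  rw [mem_range] at hi
  congr 1
  omega

lemma neg_one_pow_sub (p : ℕ) (hp : p.Prime) [CharP K p] {k : ℕ} (hkev : p = 2 ∨ Even k)
    {i : ℕ} (hi : i ≤ k) : ((-1:K)^(k-i)) = (-1)^i := by
  rcases hkev with hp2 | hkev
  · have h2 : (2 : K) = 0 := by
      have h := CharP.cast_eq_zero K p
      rw [hp2] at h
      exact_mod_cast h
    have hneg : (-1 : K) = 1 := by linear_combination -h2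
    rw [hneg, one_pow, one_pow]
  · have hsq : ((-1:K)^i) * ((-1:K)^i) = 1 := by
      rw [← pow_add]
      exact Even.neg_one_pow ⟨i, by omega⟩
    have hk' : ((-1:K)^(k-i)) * ((-1:K)^i) = 1 := by
      rw [← pow_add, show k - i + i = k by omega]
      exact hkev.neg_one_pow
    calc ((-1:K)^(k-i)) = ((-1:K)^(k-i)) * (((-1:K)^i) * ((-1:K)^i)) := by rw [hsq, mul_one]
    _ = (((-1:K)^(k-i)) * ((-1:K)^i)) * ((-1:K)^i) := by ring
    _ = (-1)^i := by rw [hk', one_mul]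

lemma Lop_eq_Sop (p N : ℕ) (hp : p.Prime) (hN : 1 ≤ N) [CharP K p] {k : ℕ}
    (hk : k = p ^ N - 1) (f g : ℕ → K) :
    Lop p n k f g = Sop n k f g := by
  have hp2 : 2 ≤ p := hp.two_le
  have hpn : p ≤ p ^ N := Nat.le_self_pow (by omega) p
  have hk1 : 1 ≤ k := by omega
  set m := (k - 1) / 2 with hm
  set A : ℕ → ℕ → K := fun i => ((-1:K)^i) • dpMul n ((dpDer n)^[i] f) ((dpDer n)^[k-i] g)
    with hA
  have hsop : Sop n k f g = (∑ i ∈ range (m+1), A i) + ∑ i ∈ range (k - m), A (k - i) :=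
    sum_range_split A k m (by omega)
  have hAk : ∀ i ≤ k, A (k - i)
      = ((-1:K)^(k-i)) • dpMul n ((dpDer n)^[k-i] f) ((dpDer n)^[i] g) := by
    intro i hi
    simp only [hA]
    rw [show k - (k - i) = i by omega]
  rcases eq_or_ne p 2 with hp2e | hpo
  · -- p = 2, k odd
    have hkodd : Odd k := by
      have h1 : k + 1 = 2 ^ N := by
        rw [hp2e] at hk hpn
        omega
      have h2 : 2 ∣ 2 ^ N := dvd_pow_self 2 (by omega)
      obtain ⟨t, ht⟩ := h2
      exact ⟨t - 1, by omega⟩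
    obtain ⟨t, ht⟩ := hkodd
    have hkm : k - m = m + 1 := by omega
    unfold Lop
    rw [if_pos hp2e, add_zero, hsop, hkm]
    rw [← Finset.sum_add_distrib]
    apply Finset.sum_congr rfl
    intro i hi
    rw [mem_range] at hi
    have hik : i ≤ k := by omega
    rw [hAk i hik, neg_one_pow_sub p hp (Or.inl hp2e) hik, smul_add]
  · -- p odd, k even
    have hpodd : Odd p := hp.odd_of_ne_two hpo
    have hpNodd : Odd (p ^ N) := hpodd.pow
    obtain ⟨t, ht⟩ := hpNodd
    have hkt : k = 2 * t := by omega
    have hkm : k - m = m + 2 := by omega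
    unfold Lop
    rw [if_neg hpo, hsop, hkm, Finset.sum_range_succ (fun i => A (k - i)) (m+1)]
    have hmid : A (k - (m+1))
        = ((-1:K)^(k/2)) • dpMul n ((dpDer n)^[k/2] f) ((dpDer n)^[k/2] g) := by
      simp only [hA]
      rw [show k - (m+1) = k/2 by omega, show k - k/2 = k/2 by omega]
    rw [hmid, ← add_assoc]
    congr 1
    rw [← Finset.sum_add_distrib]
    apply Finset.sum_congr rfl
    intro i hi
    rw [mem_range] at hi
    have hik : i ≤ k := by omega
    rw [hAk i hik, neg_one_pow_sub p hp (Or.inr ⟨t, by omega⟩) hik, smul_add]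


lemma coef_zero (p N : ℕ) (hp : p.Prime) [CharP K p] {k : ℕ} (hk : k = p^N - 1) (a : K)
    {r s : ℕ} (hr : r ≤ k) (hs : s ≤ k) (h1 : 1 ≤ r + s) (h2 : r + s ≤ k + 1) :
    (cfA K r s + (1-a) * cfB K r s) + (cfC K k r s + a * cfD K k r s) = 0 := by
  unfold cfA cfB cfC cfD
  rcases Nat.eq_zero_or_pos r with rfl | hr1
  · obtain ⟨s', rfl⟩ : ∃ s', s = s' + 1 := ⟨s - 1, by omega⟩
    rw [if_pos (by omega : 1 ≤ s' + 1), if_neg (by omega : ¬ 1 ≤ 0), if_neg (by omega : ¬ 1 ≤ 0)]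
    rw [show 0 + (s'+1) - 1 = s' by omega]
    rw [Nat.choose_zero_right, Nat.choose_zero_right]
    push_cast
    ring
  · obtain ⟨r', rfl⟩ : ∃ r', r = r' + 1 := ⟨r - 1, by omega⟩
    rcases Nat.eq_zero_or_pos s with rfl | hs1
    · rw [if_neg (by omega : ¬ 1 ≤ 0), if_pos (by omega : 1 ≤ r' + 1),
        if_pos (by omega : 1 ≤ r' + 1)]
      rw [show r' + 1 + 0 - 1 = r' by omega, Nat.sub_zero, Nat.choose_self]
      rw [choose_k_cast p N hp hk (show r' + 1 ≤ k by omega),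
        choose_k_cast p N hp hk (show r' ≤ k by omega)]
      push_cast
      ring
    · obtain ⟨s', rfl⟩ : ∃ s', s = s' + 1 := ⟨s - 1, by omega⟩
      rw [if_pos (by omega : 1 ≤ s' + 1), if_pos (by omega : 1 ≤ r' + 1),
        if_pos (by omega : 1 ≤ r' + 1)]
      rw [show r' + 1 + (s'+1) - 1 = r' + s' + 1 by omega,
        show r' + 1 - 1 = r' by omega]
      rw [choose_sub_cast p N hp hk (show s' + 1 ≤ k by omega)
          (show r' + 1 ≤ k by omega) (by omega),
        choose_sub_cast p N hp hk (show s' + 1 ≤ k by omega)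
          (show r' ≤ k by omega) (by omega)]
      have hpas : (((s'+1+(r'+1)).choose (r'+1) : ℕ) : K)
          = (((r'+s'+1).choose r' : ℕ) : K) + (((r'+s'+1).choose (r'+1) : ℕ) : K) := by
        rw [show s'+1+(r'+1) = (r'+s'+1)+1 by omega, Nat.choose_succ_succ']
        push_cast
        ring
      have hsym : ((s'+1+r').choose r' : ℕ) = (r'+s'+1).choose r' := by
        congr 1
        omega
      rw [hpas, hsym]
      ring

lemma expandA (p N : ℕ) (hp : p.Prime) [CharP K p] (hn : n = p ^ N) (k : ℕ)
    (h f g : ℕ → K) (hh : dpSupp n h) :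
    Sop n k (dpMul n h (dpDer n f)) g
      = ∑ x ∈ idxQ k, cfA K x.1 x.2 • mono n k h f g x.1 x.2 := by
  unfold Sop
  have e1 : ∀ i ∈ range (k+1),
      ((-1:K)^i) • dpMul n ((dpDer n)^[i] (dpMul n h (dpDer n f))) ((dpDer n)^[k-i] g)
      = ∑ r ∈ range (i+1),
          (((-1:K)^i) * ((i.choose r : ℕ) : K)) • mono n k h f g r (i - r + 1) := by
    intro i hi
    rw [mem_range] at hi
    rw [dpLeibniz_iter p N hp hn i hh (dpSupp_der f), dpMul_sum_left, Finset.smul_sum]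
    apply Finset.sum_congr rfl
    intro r hr
    rw [mem_range] at hr
    rw [dpMul_smul_left, smul_smul]
    congr 1
    rw [dpMul_assoc]
    unfold mono
    rw [← Function.iterate_succ_apply (dpDer n) (i-r) f,
      show k + 1 - r - (i - r + 1) = k - i by omega]
  rw [Finset.sum_congr rfl e1, Finset.sum_sigma' (range (k+1)) (fun i => range (i+1))]
  have e2 : ∑ x ∈ (range (k+1)).sigma (fun i => range (i+1)),
        (((-1:K)^x.1) * ((x.1.choose x.2 : ℕ) : K)) • mono n k h f g x.2 (x.1 - x.2 + 1)
      = ∑ x ∈ (idxQ k).filter (fun x => 1 ≤ x.2), cfA K x.1 x.2 • mono n k h f g x.1 x.2 := by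
    apply Finset.sum_nbij' (i := fun x => (⟨x.2, x.1 - x.2 + 1⟩ : Σ _ : ℕ, ℕ))
      (j := fun x => (⟨x.1 + x.2 - 1, x.1⟩ : Σ _ : ℕ, ℕ))
    · rintro ⟨x, y⟩ hx
      simp only [Finset.mem_sigma, mem_range] at hx
      simp only [idxQ, Finset.mem_filter, Finset.mem_sigma, mem_range]
      omega
    · rintro ⟨x, y⟩ hx
      simp only [idxQ, Finset.mem_filter, Finset.mem_sigma, mem_range] at hx
      simp only [Finset.mem_sigma, mem_range]
      omega
    · rintro ⟨x, y⟩ hx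
      simp only [Finset.mem_sigma, mem_range] at hx
      simp only
      rw [show y + (x - y + 1) - 1 = x by omega]
    · rintro ⟨x, y⟩ hx
      simp only [idxQ, Finset.mem_filter, Finset.mem_sigma, mem_range] at hx
      simp only
      rw [show x + y - 1 - x + 1 = y by omega]
    · rintro ⟨x, y⟩ hx
      simp only [Finset.mem_sigma, mem_range] at hx
      simp only [cfA]
      rw [if_pos (by omega : 1 ≤ x - y + 1), show y + (x - y + 1) - 1 = x by omega]
  rw [e2]
  apply Finset.sum_subset (Finset.filter_subset _ _)
  intro x hx hnx
  have hx2 : ¬ 1 ≤ x.2 := by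
    intro hc
    exact hnx (Finset.mem_filter.mpr ⟨hx, hc⟩)
  unfold cfA
  rw [if_neg hx2, zero_smul]


lemma expandB (p N : ℕ) (hp : p.Prime) [CharP K p] (hn : n = p ^ N) (k : ℕ)
    (h f g : ℕ → K) (hf : dpSupp n f) :
    Sop n k (dpMul n f (dpDer n h)) g
      = ∑ x ∈ idxQ k, cfB K x.1 x.2 • mono n k h f g x.1 x.2 := by
  unfold Sop
  have e1 : ∀ i ∈ range (k+1),
      ((-1:K)^i) • dpMul n ((dpDer n)^[i] (dpMul n f (dpDer n h))) ((dpDer n)^[k-i] g)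
      = ∑ j ∈ range (i+1),
          (((-1:K)^i) * ((i.choose j : ℕ) : K)) • mono n k h f g (i - j + 1) j := by
    intro i hi
    rw [mem_range] at hi
    rw [dpLeibniz_iter p N hp hn i hf (dpSupp_der h), dpMul_sum_left, Finset.smul_sum]
    apply Finset.sum_congr rfl
    intro j hj
    rw [mem_range] at hj
    rw [dpMul_smul_left, smul_smul]
    congr 1
    rw [← Function.iterate_succ_apply (dpDer n) (i-j) h,
      dpMul_comm ((dpDer n)^[j] f) ((dpDer n)^[i-j+1] h), dpMul_assoc]
    unfold mono
    rw [show k + 1 - (i - j + 1) - j = k - i by omega]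
  rw [Finset.sum_congr rfl e1, Finset.sum_sigma' (range (k+1)) (fun i => range (i+1))]
  have e2 : ∑ x ∈ (range (k+1)).sigma (fun i => range (i+1)),
        (((-1:K)^x.1) * ((x.1.choose x.2 : ℕ) : K)) • mono n k h f g (x.1 - x.2 + 1) x.2
      = ∑ x ∈ (idxQ k).filter (fun x => 1 ≤ x.1), cfB K x.1 x.2 • mono n k h f g x.1 x.2 := by
    apply Finset.sum_nbij' (i := fun x => (⟨x.1 - x.2 + 1, x.2⟩ : Σ _ : ℕ, ℕ))
      (j := fun x => (⟨x.1 + x.2 - 1, x.2⟩ : Σ _ : ℕ, ℕ))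
    · rintro ⟨x, y⟩ hx
      simp only [Finset.mem_sigma, mem_range] at hx
      simp only [idxQ, Finset.mem_filter, Finset.mem_sigma, mem_range]
      omega
    · rintro ⟨x, y⟩ hx
      simp only [idxQ, Finset.mem_filter, Finset.mem_sigma, mem_range] at hx
      simp only [Finset.mem_sigma, mem_range]
      omega
    · rintro ⟨x, y⟩ hx
      simp only [Finset.mem_sigma, mem_range] at hx
      simp only
      rw [show x - y + 1 + y - 1 = x by omega]
    · rintro ⟨x, y⟩ hx
      simp only [idxQ, Finset.mem_filter, Finset.mem_sigma, mem_range] at hx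
      simp only
      rw [show x + y - 1 - y + 1 = x by omega]
    · rintro ⟨x, y⟩ hx
      simp only [Finset.mem_sigma, mem_range] at hx
      simp only [cfB]
      rw [if_pos (by omega : 1 ≤ x - y + 1), show x - y + 1 + y - 1 = x by omega,
        show x - y + 1 - 1 = x - y by omega, Nat.choose_symm (by omega : y ≤ x)]
  rw [e2]
  apply Finset.sum_subset (Finset.filter_subset _ _)
  intro x hx hnx
  have hx1 : ¬ 1 ≤ x.1 := by
    intro hc
    exact hnx (Finset.mem_filter.mpr ⟨hx, hc⟩)
  unfold cfB
  rw [if_neg hx1, zero_smul]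

lemma expandC (p N : ℕ) (hp : p.Prime) [CharP K p] (hn : n = p ^ N) {k : ℕ}
    (hk : k + 1 = n) (h f g : ℕ → K) (hh : dpSupp n h) (hf : dpSupp n f) :
    Sop n k f (dpMul n h (dpDer n g))
      = ∑ x ∈ idxQ k, cfC K k x.1 x.2 • mono n k h f g x.1 x.2 := by
  unfold Sop
  have e1 : ∀ i ∈ range (k+1),
      ((-1:K)^i) • dpMul n ((dpDer n)^[i] f) ((dpDer n)^[k-i] (dpMul n h (dpDer n g)))
      = ∑ j ∈ range (k-i+1),
          (((-1:K)^i) * (((k-i).choose j : ℕ) : K)) • mono n k h f g j i := by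
    intro i hi
    rw [mem_range] at hi
    rw [dpLeibniz_iter p N hp hn (k-i) hh (dpSupp_der g), dpMul_sum_right, Finset.smul_sum]
    apply Finset.sum_congr rfl
    intro j hj
    rw [mem_range] at hj
    rw [dpMul_smul_right, smul_smul]
    congr 1
    rw [← Function.iterate_succ_apply (dpDer n) (k-i-j) g, dpMul_left_comm]
    unfold mono
    rw [show k + 1 - j - i = k - i - j + 1 by omega]
  rw [Finset.sum_congr rfl e1, Finset.sum_sigma' (range (k+1)) (fun i => range (k-i+1))]
  have e2 : ∑ x ∈ (range (k+1)).sigma (fun i => range (k-i+1)),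
        (((-1:K)^x.1) * (((k-x.1).choose x.2 : ℕ) : K)) • mono n k h f g x.2 x.1
      = ∑ x ∈ (idxQ k).filter (fun x => x.1 + x.2 ≤ k),
          cfC K k x.1 x.2 • mono n k h f g x.1 x.2 := by
    apply Finset.sum_nbij' (i := fun x => (⟨x.2, x.1⟩ : Σ _ : ℕ, ℕ))
      (j := fun x => (⟨x.2, x.1⟩ : Σ _ : ℕ, ℕ))
    · rintro ⟨x, y⟩ hx
      simp only [Finset.mem_sigma, mem_range] at hx
      simp only [idxQ, Finset.mem_filter, Finset.mem_sigma, mem_range]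
      omega
    · rintro ⟨x, y⟩ hx
      simp only [idxQ, Finset.mem_filter, Finset.mem_sigma, mem_range] at hx
      simp only [Finset.mem_sigma, mem_range]
      omega
    · rintro ⟨x, y⟩ hx
      simp only
    · rintro ⟨x, y⟩ hx
      simp only
    · rintro ⟨x, y⟩ hx
      simp only [Finset.mem_sigma, mem_range] at hx
      simp only [cfC]
  rw [e2]
  apply Finset.sum_subset (Finset.filter_subset _ _)
  rintro ⟨r, s⟩ hx hnx
  have hx1 : ¬ r + s ≤ k := by
    intro hc
    exact hnx (Finset.mem_filter.mpr ⟨hx, hc⟩)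
  simp only [idxQ, Finset.mem_sigma, mem_range] at hx
  rcases eq_or_ne s (k+1) with rfl | h2
  · have hr0 : r = 0 := by omega
    subst hr0
    simp only [cfC]
    unfold mono
    rw [dpDer_iter_ge (le_of_eq hk.symm) hf, dpMul_zero_left, dpMul_zero_right, smul_zero]
  · -- coefficient vanishes: k - s < r
    simp only [cfC]
    rw [Nat.choose_eq_zero_of_lt (by omega), Nat.cast_zero, mul_zero, zero_smul]

lemma expandD (p N : ℕ) (hp : p.Prime) [CharP K p] (hn : n = p ^ N) {k : ℕ}
    (hk : k + 1 = n) (h f g : ℕ → K) (hh : dpSupp n h) (hg : dpSupp n g) :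
    Sop n k f (dpMul n g (dpDer n h))
      = ∑ x ∈ idxQ k, cfD K k x.1 x.2 • mono n k h f g x.1 x.2 := by
  unfold Sop
  have e1 : ∀ i ∈ range (k+1),
      ((-1:K)^i) • dpMul n ((dpDer n)^[i] f) ((dpDer n)^[k-i] (dpMul n g (dpDer n h)))
      = ∑ j ∈ range (k-i+1),
          (((-1:K)^i) * (((k-i).choose j : ℕ) : K)) • mono n k h f g (k-i-j+1) i := by
    intro i hi
    rw [mem_range] at hi
    rw [dpLeibniz_iter p N hp hn (k-i) hg (dpSupp_der h), dpMul_sum_right, Finset.smul_sum]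
    apply Finset.sum_congr rfl
    intro j hj
    rw [mem_range] at hj
    rw [dpMul_smul_right, smul_smul]
    congr 1
    rw [← Function.iterate_succ_apply (dpDer n) (k-i-j) h,
      dpMul_comm ((dpDer n)^[j] g) ((dpDer n)^[k-i-j+1] h), dpMul_left_comm]
    unfold mono
    rw [show k + 1 - (k-i-j+1) - i = j by omega]
  rw [Finset.sum_congr rfl e1, Finset.sum_sigma' (range (k+1)) (fun i => range (k-i+1))]
  have e2 : ∑ x ∈ (range (k+1)).sigma (fun i => range (k-i+1)),
        (((-1:K)^x.1) * (((k-x.1).choose x.2 : ℕ) : K)) • mono n k h f g (k-x.1-x.2+1) x.1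
      = ∑ x ∈ (idxQ k).filter (fun x => 1 ≤ x.1 ∧ x.2 ≤ k),
          cfD K k x.1 x.2 • mono n k h f g x.1 x.2 := by
    apply Finset.sum_nbij' (i := fun x => (⟨k - x.1 - x.2 + 1, x.1⟩ : Σ _ : ℕ, ℕ))
      (j := fun x => (⟨x.2, k + 1 - x.1 - x.2⟩ : Σ _ : ℕ, ℕ))
    · rintro ⟨x, y⟩ hx
      simp only [Finset.mem_sigma, mem_range] at hx
      simp only [idxQ, Finset.mem_filter, Finset.mem_sigma, mem_range]
      omega
    · rintro ⟨x, y⟩ hx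
      simp only [idxQ, Finset.mem_filter, Finset.mem_sigma, mem_range] at hx
      simp only [Finset.mem_sigma, mem_range]
      omega
    · rintro ⟨x, y⟩ hx
      simp only [Finset.mem_sigma, mem_range] at hx
      simp only
      have e : k + 1 - (k - x - y + 1) - x = y := by omega
      rw [e]
    · rintro ⟨x, y⟩ hx
      simp only [idxQ, Finset.mem_filter, Finset.mem_sigma, mem_range] at hx
      simp only
      have e : k - y - (k + 1 - x - y) + 1 = x := by omega
      rw [e]
    · rintro ⟨x, y⟩ hx
      simp only [Finset.mem_sigma, mem_range] at hx
      simp only [cfD]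
      rw [if_pos (by omega : 1 ≤ k - x - y + 1),
        show k - x - y + 1 - 1 = k - x - y by omega,
        Nat.choose_symm (by omega : y ≤ k - x)]
  rw [e2]
  apply Finset.sum_subset (Finset.filter_subset _ _)
  intro x hx hnx
  have hx1 : ¬ (1 ≤ x.1 ∧ x.2 ≤ k) := by
    intro hc
    exact hnx (Finset.mem_filter.mpr ⟨hx, hc⟩)
  simp only [idxQ, Finset.mem_sigma, mem_range] at hx
  have hx0 : x.1 = 0 := by omega
  unfold cfD
  rw [if_neg (by omega), zero_smul]


lemma sum4_zero {ι : Type*} (Q : Finset ι)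
    (F1 F2 F3 F4 : ι → ℕ → K) (c c' : K)
    (hz : ∀ x ∈ Q, F1 x + c • F2 x + (F3 x + c' • F4 x) = 0) :
    ((∑ x ∈ Q, F1 x) + c • ∑ x ∈ Q, F2 x) + ((∑ x ∈ Q, F3 x) + c' • ∑ x ∈ Q, F4 x) = 0 := by
  rw [Finset.smul_sum, Finset.smul_sum, ← Finset.sum_add_distrib, ← Finset.sum_add_distrib,
    ← Finset.sum_add_distrib]
  exact Finset.sum_eq_zero hz

end Aux

/-- L_{p,N} = (∫ ⊗ id)^{*1} : F_{1-a} ⊗ F_a → F_0, of order k = p^N - 1, is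
vect(1;N)-invariant (target weight (1-a)+a+k = k+1 ≡ 0 mod p). -/
theorem Lop_invariant {K : Type*} [Field K] (p N : ℕ) (hp : p.Prime)
    (hN : 1 ≤ N) [CharP K p] (a : K) (k : ℕ) (hk : k = p ^ N - 1)
    (h f g : ℕ → K)
    (hh : dpSupp (p ^ N) h) (hf : dpSupp (p ^ N) f) (hg : dpSupp (p ^ N) g) :
    dpLie (p ^ N) 0 h (Lop p (p ^ N) k f g)
      = Lop p (p ^ N) k (dpLie (p ^ N) (1 - a) h f) g
        + Lop p (p ^ N) k f (dpLie (p ^ N) a h g) := by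
  have hpn1 : 1 ≤ p ^ N := Nat.one_le_pow _ _ hp.pos
  have hkn : k + 1 = p ^ N := by omega
  rw [Lop_eq_Sop p N hp hN hk, Lop_eq_Sop p N hp hN hk, Lop_eq_Sop p N hp hN hk]
  have lhs0 : dpLie (p ^ N) 0 h (Sop (p ^ N) k f g) = 0 := by
    unfold dpLie
    rw [Sop_der_zero p N hp rfl hkn hf hg, dpMul_zero_right, zero_smul, add_zero]
  rw [lhs0]
  unfold dpLie
  rw [Sop_add_left, Sop_smul_left, Sop_add_right, Sop_smul_right,
    expandA p N hp rfl k h f g hh, expandB p N hp rfl k h f g hf,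
    expandC p N hp rfl hkn h f g hh hf, expandD p N hp rfl hkn h f g hh hg]
  symm
  apply sum4_zero
  rintro ⟨r, s⟩ hx
  simp only [idxQ, Finset.mem_sigma, mem_range] at hx
  obtain ⟨hr2, hs2⟩ := hx
  simp only
  rcases eq_or_ne s (k+1) with rfl | hsk
  · have hr0 : r = 0 := by omega
    subst hr0
    have hm0 : mono (p ^ N) k h f g 0 (k+1) = 0 := by
      unfold mono
      rw [dpDer_iter_ge (by omega) hf, dpMul_zero_left, dpMul_zero_right]
    rw [hm0]
    simp
  rcases eq_or_ne r (k+1) with rfl | hrk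
  · have hs0 : s = 0 := by omega
    subst hs0
    have hm0 : mono (p ^ N) k h f g (k+1) 0 = 0 := by
      unfold mono
      rw [dpDer_iter_ge (by omega) hh, dpMul_zero_left]
    rw [hm0]
    simp
  rcases Nat.eq_zero_or_pos (r + s) with h0 | h1
  · have hr0 : r = 0 := by omega
    have hs0 : s = 0 := by omega
    subst hr0
    subst hs0
    have hm0 : mono (p ^ N) k h f g 0 0 = 0 := by
      unfold mono
      rw [dpDer_iter_ge (by omega) hg, dpMul_zero_right, dpMul_zero_right]
    rw [hm0]
    simp
  · have hcz := coef_zero p N hp hk a (r := r) (s := s) (by omega) (by omega) h1 (by omega)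
    rw [smul_smul, smul_smul, ← add_smul, ← add_smul, ← add_smul, hcz, zero_smul]
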